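/- arXiv:2410.06577 — 2 statements merged into one kernel-verified Lean document; each statement's English description precedes it below -/
import Mathlib

section
/- In the general gated state recurrence S_t = (α_t^T 1_m) ⊙ S_{t-1} + (α̂_t ⊙ k_t)^T (β̂_t ⊙ v_t) with β_t = 1_m, the output o_t = q_t S_t satisfies o_t = Σ_{i=1}^t [(q_t ⊙ A_t)(k_i ⊙ α̂_i / A_i)^T] (β̂_i ⊙ v_i), where A_t = ∏_{j=1}^t α_j elementwise and all entries of each α_j are nonzero. -/
open Finset

/-- Outer product of two row vectors. -/
def outer {n m : ℕ} (x : Fin n → ℝ) (y : Fin m → ℝ) : Matrix (Fin n) (Fin m) ℝ :=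
  Matrix.of fun i j => x i * y j

theorem gated_recurrence_cumprod_form {n m : ℕ}
    (α αhat k q : ℕ → Fin n → ℝ) (βhat v : ℕ → Fin m → ℝ)
    (hα : ∀ j l, α j l ≠ 0)
    (S : ℕ → Matrix (Fin n) (Fin m) ℝ)
    (h0 : S 0 = 0)
    (hrec : ∀ t : ℕ, 1 ≤ t →
      S t = Matrix.hadamard (outer (α t) (fun _ => (1 : ℝ))) (S (t - 1)) +
            outer (fun l => αhat t l * k t l) (fun c => βhat t c * v t c))
    (A : ℕ → Fin n → ℝ)
    (hA : ∀ t l, A t l = ∏ j ∈ Icc 1 t, α j l)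
    (o : ℕ → Fin m → ℝ)
    (ho : ∀ t, o t = Matrix.vecMul (q t) (S t)) :
    ∀ t : ℕ, 1 ≤ t →
      o t = ∑ i ∈ Icc 1 t,
        (dotProduct (fun l => q t l * A t l) (fun l => k i l * αhat i l / A i l)) •
          (fun c => βhat i c * v i c) := by
  have hAne : ∀ t l, A t l ≠ 0 := by
    intro t l
    rw [hA]
    exact Finset.prod_ne_zero_iff.2 fun j _ => hα j l
  have hAsucc : ∀ t l, A (t + 1) l = A t l * α (t + 1) l := by
    intro t l
    rw [hA, hA, Finset.prod_Icc_succ_top (Nat.le_add_left 1 t)]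
  have hS : ∀ t, S t = fun l c =>
      ∑ i ∈ Icc 1 t, (A t l / A i l) * (αhat i l * k i l) * (βhat i c * v i c) := by
    intro t
    induction t with
    | zero => simp [h0]; rfl
    | succ t ih =>
      rw [hrec (t + 1) (Nat.le_add_left 1 t)]
      simp only [Nat.add_sub_cancel]
      rw [ih]
      funext l c
      simp only [Matrix.add_apply, Matrix.hadamard_apply, Matrix.hadamard, outer, Matrix.of_apply,
        Finset.prod_Icc_succ_top (Nat.le_add_left 1 t)]
      rw [Finset.sum_Icc_succ_top (Nat.le_add_left 1 t), Finset.mul_sum]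
      congr 1
      · apply Finset.sum_congr rfl
        intro i hi
        have := hAne i l
        rw [hAsucc t l]
        field_simp [hAsucc]
      · have := hAne (t + 1) l
        field_simp
  intro t ht
  rw [ho, hS]
  funext c
  simp only [Matrix.vecMul, dotProduct, Finset.sum_apply, Pi.smul_apply,
    smul_eq_mul, Finset.mul_sum, Finset.sum_mul]
  rw [Finset.sum_comm]
  apply Finset.sum_congr rfl
  intro i hi
  apply Finset.sum_congr rfl
  intro l hl
  have := hAne i l
  field_simp
end

section
/- Chunkwise computation correctness: let S_t satisfy S_t = (α_t^T 1_m) ⊙ S_{t-1} + (α̂_t ⊙ k_t)^T (β̂_t ⊙ v_t), S_0 = 0. For a chunk size B and chunk index i, define the chunk-level recurrence S_{[i]} = S_{[i-1]} ⊙ ((∏_{j=(i-1)B+1}^{iB} α_j)^T 1_m) + Σ_{b=1}^{B} ((k_{(i-1)B+b} ⊙ α̂_{(i-1)B+b} ⊙ ∏_{j=(i-1)B+b+1}^{iB} α_j)^T (v_{(i-1)B+b} ⊙ β̂_{(i-1)B+b})). Then S_{[i]} = S_{iB}, i.e., the chunkwise recurrence computes the same state as B steps of the original recurrence. -/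
open Finset

theorem chunkwise_recurrence_correct {n m : ℕ} (B : ℕ)
    (α αhat k : ℕ → Fin n → ℝ) (βhat v : ℕ → Fin m → ℝ)
    (S : ℕ → Matrix (Fin n) (Fin m) ℝ)
    (h0 : S 0 = 0)
    (hrec : ∀ t : ℕ, 1 ≤ t →
      S t = Matrix.hadamard (outer (α t) (fun _ => (1 : ℝ))) (S (t - 1)) +
            outer (fun l => αhat t l * k t l) (fun c => βhat t c * v t c))
    (Sc : ℕ → Matrix (Fin n) (Fin m) ℝ)
    (hc0 : Sc 0 = 0)
    (hcrec : ∀ i : ℕ,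
      Sc (i + 1) =
        Matrix.hadamard (outer (fun l => ∏ j ∈ Icc (i * B + 1) ((i + 1) * B), α j l)
            (fun _ => (1 : ℝ))) (Sc i) +
        ∑ b ∈ Icc 1 B,
          outer (fun l => k (i * B + b) l * αhat (i * B + b) l *
              ∏ j ∈ Icc (i * B + b + 1) ((i + 1) * B), α j l)
            (fun c => v (i * B + b) c * βhat (i * B + b) c)) :
    ∀ i : ℕ, Sc i = S (i * B) := by
  have key : ∀ s d : ℕ, S (s + d) =
      Matrix.hadamard (outer (fun l => ∏ j ∈ Icc (s + 1) (s + d), α j l)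
          (fun _ => (1 : ℝ))) (S s) +
      ∑ b ∈ Icc 1 d,
        outer (fun l => k (s + b) l * αhat (s + b) l *
            ∏ j ∈ Icc (s + b + 1) (s + d), α j l)
          (fun c => v (s + b) c * βhat (s + b) c) := by
    intro s d
    induction d with
    | zero =>
      ext i j
      have he : Icc (s + 1) (s + 0) = (∅ : Finset ℕ) := Finset.Icc_eq_empty (by omega)
      have he2 : Icc 1 0 = (∅ : Finset ℕ) := Finset.Icc_eq_empty (by omega)
      simp [Matrix.hadamard, outer, he, he2]
    | succ d ih =>
      rw [show s + (d + 1) = (s + d) + 1 from rfl, hrec (s + d + 1) (by omega),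
        Nat.add_sub_cancel, ih]
      ext i j
      simp only [Matrix.add_apply, Matrix.hadamard_apply, outer, Matrix.of_apply,
        Matrix.sum_apply]
      rw [Finset.prod_Icc_succ_top (by omega : s + 1 ≤ s + d + 1),
        Finset.sum_Icc_succ_top (by omega : 1 ≤ d + 1)]
      have he : Icc (s + (d + 1) + 1) (s + d + 1) = (∅ : Finset ℕ) :=
        Finset.Icc_eq_empty (by omega)
      rw [he, Finset.prod_empty]
      have hcong : ∀ b ∈ Icc 1 d,
          (k (s + b) i * αhat (s + b) i * ∏ j ∈ Icc (s + b + 1) (s + d + 1), α j i) *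
            (v (s + b) j * βhat (s + b) j) =
          α (s + d + 1) i * ((k (s + b) i * αhat (s + b) i *
            ∏ j ∈ Icc (s + b + 1) (s + d), α j i) * (v (s + b) j * βhat (s + b) j)) := by
        intro b hb
        rw [Finset.mem_Icc] at hb
        rw [Finset.prod_Icc_succ_top (by omega : s + b + 1 ≤ s + d + 1)]
        ring_nf
      rw [Finset.sum_congr rfl hcong, ← Finset.mul_sum, mul_add, ← mul_assoc, add_assoc]
      simp only [Nat.add_succ]
      ring
  intro i
  induction i with
  | zero => simp [hc0, h0]
  | succ i ih =>
    rw [hcrec i, ih, show (i + 1) * B = i * B + B by ring, key (i * B) B]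
end
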